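/- arXiv:2202.09563 — 5 statements merged into one kernel-verified Lean document; each statement's English description precedes it below -/
import Mathlib

section
/- Let G be a finite group and x ∈ G. Then the order of x divides the cardinality of Sol_G(x). -/
/-!
Multiplying `y` on the right by a power of `x` does not change `⟨x, y⟩`, so `Sol x` is a union of
left cosets of `⟨x⟩` and its cardinality is a multiple of `|⟨x⟩| = orderOf x`.
-/

def Sol {G : Type*} [Group G] (x : G) : Set G :=
  {y | IsSolvable ↥(Subgroup.closure {x, y})}

open scoped Pointwise in
theorem Subgroup.card_dvd_card_of_mul_mem {α : Type*} [Group α] (s : Subgroup α) (t : Set α)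
    (ht : ∀ a ∈ t, ∀ b ∈ s, a * b ∈ t) : Nat.card s ∣ Nat.card t := by
  have hts : t * (s : Set α) = t :=
    (Set.mul_subset_iff.2 ht).antisymm (Set.subset_mul_left t s.one_mem)
  exact hts ▸ Dvd.intro _ (s.card_mul_eq_card_subgroup_mul_card_quotient t).symm

theorem Subgroup.closure_pair_mul_le {G : Type*} [Group G] {x h : G} (y : G)
    (hh : h ∈ zpowers x) : closure {x, y * h} ≤ closure {x, y} := by
  have hx : x ∈ closure ({x, y} : Set G) := subset_closure (by simp)
  have hy : y ∈ closure ({x, y} : Set G) := subset_closure (by simp)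
  rw [closure_le, Set.insert_subset_iff, Set.singleton_subset_iff]
  exact ⟨hx, mul_mem hy (zpowers_le.2 hx hh)⟩

theorem Subgroup.closure_pair_mul {G : Type*} [Group G] {x h : G} (y : G)
    (hh : h ∈ zpowers x) : closure {x, y * h} = closure {x, y} := by
  refine (closure_pair_mul_le y hh).antisymm ?_
  simpa using closure_pair_mul_le (y * h) (inv_mem hh)

theorem mul_mem_sol {G : Type*} [Group G] {x y h : G} (hy : y ∈ Sol x)
    (hh : h ∈ Subgroup.zpowers x) : y * h ∈ Sol x := by
  change Group.IsSolvable (Subgroup.closure {x, y * h})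
  rwa [Subgroup.closure_pair_mul y hh]

theorem stmt2_general {G : Type*} [Group G] (x : G) :
    orderOf x ∣ Nat.card (Sol x) := by
  rw [← Nat.card_zpowers]
  exact (Subgroup.zpowers x).card_dvd_card_of_mul_mem (Sol x) fun _ hy _ hh => mul_mem_sol hy hh

theorem stmt2 {G : Type*} [Group G] [Finite G] (x : G) :
    orderOf x ∣ Nat.card (Sol x) :=
  stmt2_general x
end

section
/- Let G be a finite group and x ∈ G. Then |C_G(x)| divides |Sol_G(x)|. -/
/-!
Induction on `|G|`. If `Z = Z(G)` is nontrivial, `⟨x, y⟩` is solvable if and only if its image in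
`G/Z` is, so `Sol_G(x)` is the full preimage of `Sol_{G/Z}(x̄)` and has `|Z| · |Sol_{G/Z}(x̄)|`
elements, while `C_G(x)` lies in the preimage of `C_{G/Z}(x̄)`, of order `|Z| · |C_{G/Z}(x̄)|`.

If `Z(G) = 1`, the group `C = C_G(x)` acts on `Sol_G(x)` by conjugation. An element `c ≠ 1` of `C`
fixes exactly `Sol_{C_G(c)}(x)`, and `C_C(c) = C_{C_G(c)}(x)`; since `C_G(c)` is a proper subgroup,
induction shows that `|C_C(c)|` divides the number of fixed points of `c`. In Burnside's count
`∑_{c ∈ C} |Fix(c)| = |C| · #orbits` the terms with `c ≠ 1`, grouped by conjugacy classes of `C`,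
then add up to a multiple of `|C|`, hence so does the remaining term `|Fix(1)| = |Sol_G(x)|`.
-/

open Subgroup MulAction

theorem Group.isSolvable_congr {G H : Type*} [Group G] [Group H] (e : G ≃* H) :
    Group.IsSolvable G ↔ Group.IsSolvable H :=
  ⟨fun _ => Group.isSolvable_of_surjective (f := e.toMonoidHom) e.surjective,
    fun _ => Group.isSolvable_of_surjective (f := e.symm.toMonoidHom) e.symm.surjective⟩

theorem card_centralizer_in_subgroup {G : Type*} [Group G] (H : Subgroup G) (h : H) :
    Nat.card (centralizer {h}) = Nat.card (H ⊓ centralizer {(h : G)} : Subgroup G) := by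
  have : centralizer {h} = (centralizer {(h : G)}).subgroupOf H := by
    ext g
    simp only [mem_subgroupOf, mem_centralizer_singleton_iff, Subtype.ext_iff, coe_mul]
  rw [this, ← card_map_of_injective H.subtype_injective, subgroupOf_map_subtype, inf_comm]

section Counting

variable {A X : Type*} [Group A] [MulAction A X]

theorem card_dvd_sum_of_card_stabilizer_dvd [Fintype X] (f : X → ℕ)
    (hf : ∀ (a : A) x, f (a • x) = f x) (hdvd : ∀ x, Nat.card (stabilizer A x) ∣ f x) :
    Nat.card A ∣ ∑ x, f x := by
  classical
  rw [← (selfEquivSigmaOrbits A X).symm.sum_comp, Fintype.sum_sigma]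
  refine Finset.dvd_sum fun ω _ => ?_
  have hconst (y : orbit A ω.out) : f ((selfEquivSigmaOrbits A X).symm ⟨ω, y⟩) = f ω.out := by
    obtain ⟨_, a, rfl⟩ := y
    exact hf a _
  have horbit : Nat.card (orbit A ω.out) * Nat.card (stabilizer A ω.out) = Nat.card A := by
    rw [Nat.card_coe_set_eq, ← index_stabilizer]
    exact index_mul_card _
  obtain ⟨k, hk⟩ := hdvd ω.out
  refine ⟨k, ?_⟩
  rw [Fintype.sum_congr _ _ hconst, Finset.sum_const, Finset.card_univ, smul_eq_mul, hk,
    ← mul_assoc, Fintype.card_eq_nat_card, horbit]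

theorem card_fixedBy_conj (a b : A) :
    Nat.card (fixedBy X (a * b * a⁻¹)) = Nat.card (fixedBy X b) := by
  rw [← smul_fixedBy, Nat.card_coe_set_eq, Nat.card_coe_set_eq, Set.ncard_smul_set]

theorem card_dvd_card_of_card_centralizer_dvd_card_fixedBy [Finite A] [Finite X]
    (h : ∀ a : A, a ≠ 1 → Nat.card (centralizer {a}) ∣ Nat.card (fixedBy X a)) :
    Nat.card A ∣ Nat.card X := by
  classical
  have := Fintype.ofFinite A
  let F : A → ℕ := fun a => Nat.card (fixedBy X a)
  have hburnside : Nat.card A ∣ ∑ a, F a := by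
    have := Fintype.ofFinite X
    refine ⟨Fintype.card (orbitRel.Quotient A X), ?_⟩
    simp only [F, Nat.card_eq_fintype_card]
    rw [mul_comm]
    exact sum_card_fixedBy_eq_card_orbits_mul_card_group A X
  have hnontrivial : Nat.card A ∣ ∑ a, if a = 1 then 0 else F a := by
    refine card_dvd_sum_of_card_stabilizer_dvd (A := ConjAct A) _ (fun g a => ?_) (fun a => ?_)
    · simp only [ConjAct.smul_def, conj_eq_one_iff, F, card_fixedBy_conj]
    · rw [ConjAct.stabilizer_eq_centralizer]
      split_ifs with ha
      exacts [dvd_zero _, h a ha]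
  have hsplit : ∑ a, F a = Nat.card X + ∑ a, if a = 1 then 0 else F a := by
    have hF1 : F 1 = Nat.card X := by simp only [F, fixedBy_one_eq_univ, Nat.card_univ]
    rw [← Finset.add_sum_erase _ _ (Finset.mem_univ 1), hF1, Finset.sum_ite,
      Finset.sum_const_zero, zero_add, Finset.filter_ne']
  rw [hsplit] at hburnside
  exact (Nat.dvd_add_left hnontrivial).mp hburnside

end Counting

section Sol

variable {G H : Type*} [Group G] [Group H]

theorem map_closure_pair (f : G →* H) (x y : G) :
    (closure {x, y}).map f = closure {f x, f y} := by
  rw [MonoidHom.map_closure, Set.image_pair]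

theorem map_mem_sol (f : G →* H) {x y : G} (hy : y ∈ Sol x) : f y ∈ Sol (f x) := by
  have : Group.IsSolvable (closure {x, y}) := hy
  change Group.IsSolvable (closure {f x, f y})
  rw [← map_closure_pair]
  exact Group.isSolvable_of_surjective (f.subgroupMap_surjective _)

theorem map_mem_sol_iff (f : G →* H) (hf : Function.Injective f) {x y : G} :
    f y ∈ Sol (f x) ↔ y ∈ Sol x := by
  change Group.IsSolvable (closure {f x, f y}) ↔ Group.IsSolvable (closure {x, y})
  rw [← map_closure_pair]
  exact (Group.isSolvable_congr (equivMapOfInjective _ f hf)).symm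

theorem mk_mem_sol_iff (N : Subgroup G) [N.Normal] [Group.IsSolvable N] {x y : G} :
    (y : G ⧸ N) ∈ Sol (x : G ⧸ N) ↔ y ∈ Sol x := by
  refine ⟨fun hy => ?_, map_mem_sol (QuotientGroup.mk' N)⟩
  set K := closure {x, y}
  let φ := (QuotientGroup.mk' N).comp K.subtype
  have hker : φ.ker = N.subgroupOf K := by
    ext g
    simp [φ, Subgroup.mem_subgroupOf]
  have hrange : φ.range = closure ({(x : G ⧸ N), (y : G ⧸ N)} : Set (G ⧸ N)) := by
    rw [MonoidHom.range_comp, range_subtype, map_closure_pair]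
    rfl
  have : Group.IsSolvable (N.subgroupOf K) :=
    Group.isSolvable_of_isSolvable_injective (f := K.subtype.subgroupComap N)
      fun _ _ h => Subtype.ext (Subtype.ext (congrArg (Subtype.val : N → G) h))
  have : Group.IsSolvable φ.range := hrange ▸ hy
  exact Group.isSolvable_of_ker_le_range (N.subgroupOf K).subtype φ.rangeRestrict
    (by rw [MonoidHom.ker_rangeRestrict, hker, range_subtype])

theorem conj_mem_sol {x y c : G} (hc : c ∈ centralizer {x}) (hy : y ∈ Sol x) :
    c * y * c⁻¹ ∈ Sol x := by
  have hx : MulAut.conj c x = x := by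
    rw [MulAut.conj_apply, mem_centralizer_singleton_iff.mp hc, mul_inv_cancel_right]
  simpa [hx] using (map_mem_sol_iff (MulAut.conj c).toMonoidHom (MulAut.conj c).injective).2 hy

instance (x : G) : MulAction (centralizer {x}) (Sol x) where
  smul c y := ⟨c * y * (c : G)⁻¹, conj_mem_sol c.2 y.2⟩
  one_smul y := Subtype.ext <| by
    change (1 : G) * y * (1 : G)⁻¹ = y
    group
  mul_smul c d y := Subtype.ext <| by
    change (c * d : G) * y * (c * d : G)⁻¹ = c * (d * y * (d : G)⁻¹) * (c : G)⁻¹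
    group

theorem image_val_sol (L : Subgroup G) (x : L) :
    Subtype.val '' Sol x = Sol (x : G) ∩ L := by
  ext y
  constructor
  · rintro ⟨z, hz, rfl⟩
    exact ⟨(map_mem_sol_iff L.subtype L.subtype_injective).2 hz, z.2⟩
  · rintro ⟨hy, hyL⟩
    exact ⟨⟨y, hyL⟩, (map_mem_sol_iff L.subtype L.subtype_injective (y := ⟨y, hyL⟩)).1 hy, rfl⟩

theorem image_val_fixedBy_sol (x : G) (c : centralizer {x}) :
    Subtype.val '' fixedBy (Sol x) c = Sol x ∩ centralizer {(c : G)} := by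
  ext y
  constructor
  · rintro ⟨z, hz, rfl⟩
    exact ⟨z.2, mem_centralizer_singleton_iff.2
      (mul_inv_eq_iff_eq_mul.1 (congrArg Subtype.val hz)).symm⟩
  · rintro ⟨hy, hyc⟩
    exact ⟨⟨y, hy⟩, Subtype.ext
      (mul_inv_eq_iff_eq_mul.2 (mem_centralizer_singleton_iff.1 hyc).symm), rfl⟩

theorem card_centralizer_dvd_card_sol_of_center_eq_bot [Finite G] (hZ : center G = ⊥)
    (ih : ∀ L : Subgroup G, L ≠ ⊤ → ∀ y : L, Nat.card (centralizer {y}) ∣ Nat.card (Sol y))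
    (x : G) : Nat.card (centralizer {x}) ∣ Nat.card (Sol x) := by
  refine card_dvd_card_of_card_centralizer_dvd_card_fixedBy fun c hc => ?_
  have hxc : x ∈ centralizer {(c : G)} :=
    mem_centralizer_singleton_iff.2 (mem_centralizer_singleton_iff.1 c.2).symm
  have hL : centralizer {(c : G)} ≠ ⊤ := by
    rw [Ne, centralizer_eq_top_iff_subset, Set.singleton_subset_iff, hZ, SetLike.mem_coe,
      mem_bot]
    exact fun h => hc (Subtype.ext h)
  have hfix : Nat.card (fixedBy (Sol x) c) = Nat.card (Sol (⟨x, hxc⟩ : centralizer {(c : G)})) := by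
    rw [← Nat.card_image_of_injective Subtype.val_injective, image_val_fixedBy_sol,
      ← Nat.card_image_of_injective Subtype.val_injective, image_val_sol]
  have := ih _ hL ⟨x, hxc⟩
  rwa [card_centralizer_in_subgroup, inf_comm, ← card_centralizer_in_subgroup, ← hfix] at this

theorem card_centralizer_dvd_card_sol_of_quotient (N : Subgroup G) [N.Normal]
    [Group.IsSolvable N] (x : G)
    (h : Nat.card (centralizer {(x : G ⧸ N)}) ∣ Nat.card (Sol (x : G ⧸ N))) :
    Nat.card (centralizer {x}) ∣ Nat.card (Sol x) := by
  have hsol : Sol x = QuotientGroup.mk ⁻¹' Sol (x : G ⧸ N) :=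
    Set.ext fun y => (mk_mem_sol_iff N).symm
  have hle : centralizer {x} ≤ (centralizer {(x : G ⧸ N)}).comap (QuotientGroup.mk' N) :=
    fun c hc => mem_centralizer_singleton_iff.2 (by
      rw [QuotientGroup.mk'_apply, ← QuotientGroup.mk_mul, ← QuotientGroup.mk_mul,
        mem_centralizer_singleton_iff.1 hc])
  calc Nat.card (centralizer {x})
      ∣ Nat.card ((centralizer {(x : G ⧸ N)}).comap (QuotientGroup.mk' N)) := card_dvd_of_le hle
    _ = Nat.card N * Nat.card (centralizer {(x : G ⧸ N)}) :=
      QuotientGroup.card_preimage_mk N (centralizer {(x : G ⧸ N)})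
    _ ∣ Nat.card N * Nat.card (Sol (x : G ⧸ N)) := mul_dvd_mul_left _ h
    _ = Nat.card (Sol x) := by rw [hsol, QuotientGroup.card_preimage_mk]

end Sol

theorem stmt3 {G : Type*} [Group G] [Finite G] (x : G) :
    Nat.card (Subgroup.centralizer {x} : Subgroup G) ∣ Nat.card (Sol x) := by
  induction hn : Nat.card G using Nat.strong_induction_on generalizing G with
  | _ n ih =>
    subst hn
    by_cases hZ : center G = ⊥
    · refine card_centralizer_dvd_card_sol_of_center_eq_bot hZ (fun L hL y => ih _ ?_ y rfl) x
      rw [← L.index_mul_card]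
      exact lt_mul_of_one_lt_left Nat.card_pos (one_lt_index_of_ne_top hL)
    · have : Group.IsSolvable (center G) :=
        Group.isSolvable_of_comm fun a b => Subtype.ext (mem_center_iff.1 b.2 a)
      refine card_centralizer_dvd_card_sol_of_quotient (center G) x (ih _ ?_ _ rfl)
      rw [← (center G).index_mul_card]
      exact lt_mul_of_one_lt_right Nat.card_pos ((one_lt_card_iff_ne_bot _).2 hZ)
end

section
/- Let G be a finite group, x ∈ G, and k ≥ 2 an integer. If every left-normed commutator [u_1, u_2, ..., u_k] of weight k with all entries in Sol_G(x) is trivial, then Sol_G(x) is a subgroup of G, and it is nilpotent of class at most k−1. -/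
open scoped commutatorElement in
/-- Left-normed long commutator: `listComm [x₁, ..., xₖ] = [x₁, x₂, ..., xₖ]`. -/
def listComm {G : Type*} [Group G] : List G → G
  | [] => 1
  | a :: l => l.foldl (fun u v => ⁅u, v⁆) a

/-!
Let `H` be the subgroup generated by `S = Sol x`. Since `H` is generated by `S`, an element `g ∈ H`
with `[g, s] ∈ ζ_i(H)` for every `s ∈ S` lies in `ζ_{i+1}(H)`; by downward induction on `i`, every
left-normed commutator of `k - i` elements of `S` therefore lies in `ζ_i(H)`, and for `i = k - 1`
this gives `S ⊆ ζ_{k-1}(H)`, so `H` is nilpotent of class at most `k - 1`. In particular `H` is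
solvable, so `⟨x, y⟩ ≤ H` is solvable for every `y ∈ H` (note `x ∈ S`), i.e. `H = Sol x`.
-/

open scoped commutatorElement

section ListComm

variable {G G' : Type*} [Group G] [Group G']

lemma listComm_cons_append_singleton (a : G) (t : List G) (v : G) :
    listComm (a :: (t ++ [v])) = ⁅listComm (a :: t), v⁆ := by
  simp [listComm, List.foldl_append]

lemma map_listComm (f : G →* G') (l : List G) : f (listComm l) = listComm (l.map f) := by
  rcases l with _ | ⟨a, t⟩
  · simp [listComm]
  · simp only [listComm, List.map_cons, List.foldl_map]
    exact (List.foldl_hom f fun u v => (map_commutatorElement f u v).symm).symm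

end ListComm

namespace Subgroup

variable {G : Type*} [Group G] {S : Set G} {k : ℕ}

theorem mem_upperCentralSeries_succ_of_forall_commutator_mem (hS : closure S = ⊤) {n : ℕ}
    {g : G} (hg : ∀ s ∈ S, ⁅g, s⁆ ∈ upperCentralSeries G n) :
    g ∈ upperCentralSeries G (n + 1) := by
  let π := QuotientGroup.mk' (upperCentralSeries G n)
  have hπS : closure (π '' S) = ⊤ := by
    rw [← MonoidHom.map_closure, hS, ← MonoidHom.range_eq_map,
      MonoidHom.range_eq_top.mpr (QuotientGroup.mk'_surjective _)]
  show g ∈ upperCentralSeriesStep (upperCentralSeries G n)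
  -- the image of `g` in `G ⧸ ζ_n(G)` commutes with the generators `π '' S`, hence is central
  rw [upperCentralSeriesStep_eq_comap_center, mem_comap, center_eq_iInf hπS]
  simp only [mem_iInf, mem_centralizer_singleton_iff, Set.forall_mem_image]
  intro s hs
  have : π ⁅g, s⁆ = 1 := (QuotientGroup.eq_one_iff _).mpr (hg s hs)
  rw [map_commutatorElement, commutatorElement_eq_one_iff_commute] at this
  exact this.eq

theorem listComm_cons_mem_upperCentralSeries (hS : closure S = ⊤)
    (h : ∀ l : List G, l.length = k → (∀ u ∈ l, u ∈ S) → listComm l = 1) (i : ℕ) (a : G)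
    (t : List G) (ha : a ∈ S) (ht : ∀ u ∈ t, u ∈ S) (hlen : t.length + 1 + i = k) :
    listComm (a :: t) ∈ upperCentralSeries G i := by
  induction i generalizing t with
  | zero =>
    rw [h (a :: t) (by simpa using hlen) (List.forall_mem_cons.mpr ⟨ha, ht⟩)]
    exact one_mem _
  | succ i ih =>
    refine mem_upperCentralSeries_succ_of_forall_commutator_mem hS fun v hv => ?_
    rw [← listComm_cons_append_singleton]
    exact ih (t ++ [v]) (by simpa [or_imp, forall_and] using ⟨ht, hv⟩)
      (by simp only [List.length_append, List.length_singleton]; omega)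

theorem upperCentralSeries_eq_top_of_listComm_eq_one (hS : closure S = ⊤) (hk : 1 ≤ k)
    (h : ∀ l : List G, l.length = k → (∀ u ∈ l, u ∈ S) → listComm l = 1) :
    upperCentralSeries G (k - 1) = ⊤ := by
  rw [eq_top_iff, ← hS, closure_le]
  intro a ha
  exact listComm_cons_mem_upperCentralSeries hS h (k - 1) a [] ha (by simp) (by simp; omega)

theorem lowerCentralSeries_closure_eq_bot_of_listComm_eq_one (hk : 1 ≤ k)
    (h : ∀ l : List G, l.length = k → (∀ u ∈ l, u ∈ S) → listComm l = 1) :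
    (closure S).lowerCentralSeries (k - 1) = ⊥ := by
  set H := closure S
  have hH : ∀ l : List H, l.length = k → (∀ u ∈ l, u ∈ H.subtype ⁻¹' S) → listComm l = 1 := by
    intro l hl hlS
    apply H.subtype_injective
    rw [map_listComm, map_one]
    exact h _ (by simpa using hl) (by simpa using hlS)
  rw [← top_subtype_lowerCentralSeries, lowerCentralSeries_eq_bot_iff_upperCentralSeries_eq_top.mpr
    (upperCentralSeries_eq_top_of_listComm_eq_one (closure_preimage_eq_top S) hk hH), map_bot]

end Subgroup

section Sol

variable {G : Type*} [Group G]

lemma mem_Sol_self (x : G) : x ∈ Sol x := by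
  change Group.IsSolvable (Subgroup.closure {x, x})
  rw [Set.pair_eq_singleton, ← Subgroup.zpowers_eq_closure]
  exact Group.isSolvable_of_comm mul_comm'

lemma coe_closure_Sol_eq_of_isSolvable (x : G) [Group.IsSolvable (Subgroup.closure (Sol x))] :
    (Subgroup.closure (Sol x) : Set G) = Sol x := by
  refine Set.Subset.antisymm (fun y hy => ?_) Subgroup.subset_closure
  have hle : Subgroup.closure {x, y} ≤ Subgroup.closure (Sol x) :=
    Subgroup.closure_le _ |>.mpr <| Set.insert_subset (Subgroup.subset_closure (mem_Sol_self x))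
      (Set.singleton_subset_iff.mpr hy)
  exact Group.isSolvable_of_isSolvable_injective (Subgroup.inclusion_injective hle)

end Sol

theorem stmt6_general {G : Type*} [Group G] (x : G) (k : ℕ) (hk : 2 ≤ k)
    (h : ∀ l : List G, l.length = k → (∀ u ∈ l, u ∈ Sol x) → listComm l = 1) :
    ∃ H : Subgroup G, (H : Set G) = Sol x ∧ Group.IsNilpotent H ∧
      lowerCentralSeries H (k - 1) = ⊥ := by
  have hγ := Subgroup.lowerCentralSeries_closure_eq_bot_of_listComm_eq_one (by omega) h
  have : Group.IsNilpotent (Subgroup.closure (Sol x)) :=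
    Subgroup.isNilpotent_of_lowerCentralSeries_eq_bot hγ
  exact ⟨_, coe_closure_Sol_eq_of_isSolvable x, this, hγ⟩

theorem stmt6 {G : Type*} [Group G] [Finite G] (x : G) (k : ℕ) (hk : 2 ≤ k)
    (h : ∀ l : List G, l.length = k → (∀ u ∈ l, u ∈ Sol x) → listComm l = 1) :
    ∃ H : Subgroup G, (H : Set G) = Sol x ∧ Group.IsNilpotent H ∧
      lowerCentralSeries H (k - 1) = ⊥ :=
  stmt6_general x k hk h
end

section
/- Let G be a finite group and x ∈ G an element of prime order p with P = ⟨x⟩. If |Sol_G(x)| ≤ p², then Sol_G(x) = N_G(P). -/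
open Subgroup

instance Group.isSolvable_of_isMulCommutative {K : Type*} [Group K] [IsMulCommutative K] :
    Group.IsSolvable K :=
  Group.isSolvable_of_comm IsMulCommutative.is_comm.comm

theorem QuotientGroup.zpowers_mk_eq_top_of_closure_pair_eq_top {K : Type*} [Group K]
    {N : Subgroup K} [N.Normal] {a b : K} (hab : closure {a, b} = ⊤) (ha : a ∈ N) :
    zpowers (b : K ⧸ N) = ⊤ := by
  calc zpowers (b : K ⧸ N) = (closure {a, b}).map (QuotientGroup.mk' N) := by
        rw [MonoidHom.map_closure, Set.image_pair, QuotientGroup.mk'_apply,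
          (QuotientGroup.eq_one_iff a).mpr ha, closure_insert_one, zpowers_eq_closure]
        rfl
    _ = ⊤ := by rw [hab, map_top_of_surjective _ (QuotientGroup.mk'_surjective N)]

theorem Subgroup.closure_pair_mk_eq_top {G : Type*} [Group G] {x y : G} (hx : x ∈ closure {x, y})
    (hy : y ∈ closure {x, y}) :
    closure {(⟨x, hx⟩ : closure {x, y}), ⟨y, hy⟩} = ⊤ := by
  rw [← closure_closure_coe_preimage]
  congr 1
  ext z
  simp [Subtype.ext_iff]

theorem isSolvable_closure_pair_of_mem_normalizer {G : Type*} [Group G] {x y : G}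
    (hy : y ∈ normalizer (zpowers x : Set G)) : Group.IsSolvable (closure {x, y}) := by
  set H := closure {x, y}
  have hxH : x ∈ H := subset_closure (Set.mem_insert x {y})
  have hyH : y ∈ H := subset_closure (Set.mem_insert_of_mem x rfl)
  have hPH : zpowers x ≤ H := zpowers_le.mpr hxH
  have hHN : H ≤ normalizer (zpowers x : Set G) :=
    (closure_le _).mpr (Set.insert_subset (le_normalizer (mem_zpowers x))
      (Set.singleton_subset_iff.mpr hy))
  have := (normal_subgroupOf_iff_le_normalizer hPH).mpr hHN
  have : IsCyclic (H ⧸ (zpowers x).subgroupOf H) :=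
    isCyclic_iff_exists_zpowers_eq_top.mpr ⟨_,
      QuotientGroup.zpowers_mk_eq_top_of_closure_pair_eq_top
        (closure_pair_mk_eq_top hxH hyH) (mem_subgroupOf.mpr (mem_zpowers x))⟩
  exact Group.isSolvable_of_ker_le_range (inclusion hPH)
    (QuotientGroup.mk' ((zpowers x).subgroupOf H)) fun z hz =>
    ⟨⟨z, by rwa [QuotientGroup.ker_mk'] at hz⟩, rfl⟩

theorem closure_pair_subset_sol {G : Type*} [Group G] {x y : G} (hy : y ∈ Sol x) :
    (closure {x, y} : Set G) ⊆ Sol x := by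
  have : Group.IsSolvable (closure {x, y}) := hy
  intro z hz
  have hle : closure {x, z} ≤ closure {x, y} :=
    (closure_le _).mpr (Set.insert_subset (subset_closure (Set.mem_insert x {y}))
      (Set.singleton_subset_iff.mpr hz))
  exact Group.isSolvable_of_isSolvable_injective (inclusion_injective hle)

theorem Subgroup.normal_of_card_eq_prime_of_card_le_sq {H : Type*} [Group H] [Finite H] {p : ℕ}
    [hp : Fact p.Prime] (Q : Subgroup H) (hQ : Nat.card Q = p) (hH : Nat.card H ≤ p ^ 2) :
    Q.Normal := by
  have hindex_pos : 0 < Q.index := Nat.pos_of_ne_zero Q.index_ne_zero_of_finite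
  have hcard : p * Q.index = Nat.card H := hQ ▸ Q.card_mul_index
  have hindex : Q.index ≤ p :=
    Nat.le_of_mul_le_mul_left (hcard.trans_le (hH.trans_eq (sq p))) hp.out.pos
  rcases hindex.eq_or_lt with hindex | hindex
  · have := IsPGroup.isMulCommutative_of_card_eq_prime_sq (by rw [← hcard, hindex, sq])
    infer_instance
  · have hpQ : IsPGroup p Q := IsPGroup.of_card (hQ.trans (pow_one p).symm)
    have hndvd : ¬ p ∣ Q.index := fun h => (Nat.le_of_dvd hindex_pos h).not_gt hindex
    have : Subsingleton (Sylow p H) := by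
      have hlt : Nat.card (Sylow p H) < p :=
        (Nat.le_of_dvd hindex_pos (by simpa using (hpQ.toSylow hndvd).card_dvd_index)).trans_lt
          hindex
      exact Finite.card_le_one_iff_subsingleton.mp
        ((card_sylow_modEq_one p H).eq_of_lt_of_lt hlt hp.out.one_lt).le
    simpa using Sylow.normal_of_subsingleton (hpQ.toSylow hndvd)

theorem stmt9 {G : Type*} [Group G] [Finite G] (x : G) (p : ℕ) (hp : p.Prime)
    (hx : orderOf x = p) (hcard : Nat.card (Sol x) ≤ p ^ 2) :
    Sol x = (Subgroup.normalizer (Subgroup.zpowers x : Set G) : Set G) := by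
  have : Fact p.Prime := ⟨hp⟩
  ext y
  refine ⟨fun hy => ?_, isSolvable_closure_pair_of_mem_normalizer⟩
  set H := closure {x, y}
  have hPH : zpowers x ≤ H := zpowers_le.mpr (subset_closure (Set.mem_insert x {y}))
  have hH : Nat.card H ≤ p ^ 2 :=
    (Nat.card_mono (Set.toFinite _) (closure_pair_subset_sol hy)).trans hcard
  have hQ : Nat.card ((zpowers x).subgroupOf H) = p := by
    rw [Nat.card_congr (subgroupOfEquivOfLe hPH).toEquiv, Nat.card_zpowers, hx]
  have := normal_of_card_eq_prime_of_card_le_sq _ hQ hH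
  exact le_normalizer_of_normal_subgroupOf hPH (subset_closure (Set.mem_insert_of_mem x rfl))
end

section
/- In the alternating group A_5, for any element x of order 5 one has Sol_G(x) = N_G(⟨x⟩) and |Sol_G(x)| = 10. -/
open Subgroup

theorem IsSimpleGroup.card_dvd_factorial_index {G : Type*} [Group G] [Finite G] [IsSimpleGroup G]
    {H : Subgroup G} (hH : H ≠ ⊤) : Nat.card G ∣ H.index.factorial := by
  have hcore : H.normalCore = ⊥ :=
    H.normalCore_normal.eq_bot_or_eq_top.resolve_right fun h ↦
      hH (top_le_iff.mp (h ▸ H.normalCore_le))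
  rw [← index_bot, ← hcore, normalCore_eq_ker, index_ker, index_eq_card, ← Nat.card_perm]
  exact card_subgroup_dvd_card _

theorem IsSimpleGroup.not_isSolvable_of_not_prime_card {G : Type*} [Group G] [IsSimpleGroup G]
    (hG : ¬ (Nat.card G).Prime) : ¬ Group.IsSolvable G := fun h ↦ by
  let _ : CommGroup G := { mul_comm := IsSimpleGroup.comm_iff_isSolvable.mpr h }
  exact hG IsSimpleGroup.prime_card

theorem Subgroup.le_normalizer_of_relIndex_dvd_two {G : Type*} [Group G] {H K : Subgroup G}
    (hHK : H ≤ K) (h : H.relIndex K ∣ 2) : K ≤ normalizer H := by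
  rcases (Nat.dvd_prime Nat.prime_two).mp h with h | h
  · exact (relIndex_eq_one.mp h).trans le_normalizer
  · have := normal_of_index_eq_two h
    exact le_normalizer_of_normal_subgroupOf hHK

namespace IsSimpleGroup

variable {G : Type*} [Group G] [Finite G] [IsSimpleGroup G]

theorem five_le_index_of_card_eq_sixty (hG : Nat.card G = 60) {H : Subgroup G} (hH : H ≠ ⊤) :
    5 ≤ H.index := by
  by_contra! hlt
  have h60 := Nat.le_of_dvd (Nat.factorial_pos _) (hG ▸ card_dvd_factorial_index hH)
  have h24 : H.index.factorial ≤ 24 := Nat.factorial_le (n := 4) (by omega)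
  omega

theorem card_normalizer_of_card_eq_five (hG : Nat.card G = 60) {P : Subgroup G}
    (hP : Nat.card P = 5) : Nat.card (normalizer (P : Set G)) = 10 := by
  have : Fact (Nat.Prime 5) := ⟨by norm_num⟩
  have hPi : P.index = 12 := by
    have := P.card_mul_index
    rw [hP, hG] at this
    omega
  let S : Sylow 5 G := (IsPGroup.of_card (n := 1) hP).toSylow (by rw [hPi]; norm_num)
  set n := (normalizer (P : Set G)).index with hn
  have hn_sylow : Nat.card (Sylow 5 G) = n := S.card_eq_index_normalizer
  have hn_dvd : n ∣ 12 := hn_sylow ▸ hPi ▸ S.card_dvd_index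
  have hn_mod : n % 5 = 1 := hn_sylow ▸ card_sylow_modEq_one 5 G
  have hn_ne : n ≠ 1 := by
    rw [hn, Ne, index_eq_one, normalizer_eq_top_iff]
    intro hnormal
    rcases hnormal.eq_bot_or_eq_top with h | h <;> simp [h, hG] at hP
  have hn6 : n = 6 := by
    have := Nat.le_of_dvd (by norm_num) hn_dvd
    interval_cases n <;> omega
  have := (normalizer (P : Set G)).card_mul_index
  rw [← hn, hn6, hG] at this
  omega

theorem isSolvable_normalizer_of_card_eq_five (hG : Nat.card G = 60) {P : Subgroup G}
    (hP : Nat.card P = 5) : Group.IsSolvable (normalizer (P : Set G)) := by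
  have : IsZGroup (normalizer (P : Set G)) := .of_squarefree <| by
    rw [card_normalizer_of_card_eq_five hG hP]; decide +kernel
  infer_instance

theorem le_normalizer_of_card_eq_five (hG : Nat.card G = 60) {P H : Subgroup G}
    (hP : Nat.card P = 5) (hPH : P ≤ H) (hH : H ≠ ⊤) : H ≤ normalizer (P : Set G) := by
  refine le_normalizer_of_relIndex_dvd_two hPH ?_
  have h12 : P.relIndex H * H.index = 12 := by
    have h60 : Nat.card P * (P.relIndex H * H.index) = 60 := by
      rw [relIndex_mul_index hPH, card_mul_index, hG]
    rw [hP] at h60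
    omega
  have h5 := five_le_index_of_card_eq_sixty hG hH
  have : P.relIndex H ≤ 2 := by nlinarith
  interval_cases P.relIndex H <;> omega

theorem sol_eq_normalizer_zpowers (hG : Nat.card G = 60) {x : G} (hx : orderOf x = 5) :
    Sol x = normalizer (zpowers x : Set G) := by
  have hP : Nat.card (zpowers x) = 5 := by rw [Nat.card_zpowers, hx]
  ext y
  constructor
  · intro (hsol : Group.IsSolvable (closure {x, y}))
    have hne : closure {x, y} ≠ ⊤ := by
      intro htop
      rw [htop] at hsol
      exact not_isSolvable_of_not_prime_card (G := G) (by norm_num [hG])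
        (Group.isSolvable_of_surjective (f := (⊤ : Subgroup G).subtype)
          fun g ↦ ⟨⟨g, mem_top g⟩, rfl⟩)
    have hxH : zpowers x ≤ closure {x, y} := zpowers_le.mpr (subset_closure (by simp))
    exact le_normalizer_of_card_eq_five hG hP hxH hne (subset_closure (by simp))
  · intro hy
    have hle : closure {x, y} ≤ normalizer (zpowers x : Set G) := by
      rw [closure_le]
      rintro z (rfl | rfl)
      · exact le_normalizer (mem_zpowers z)
      · exact hy
    have := isSolvable_normalizer_of_card_eq_five hG hP
    exact Group.isSolvable_of_isSolvable_injective (inclusion_injective hle)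

end IsSimpleGroup

theorem stmt17 (x : alternatingGroup (Fin 5)) (hx : orderOf x = 5) :
    Sol x = (Subgroup.normalizer ((Subgroup.zpowers x : Subgroup (alternatingGroup (Fin 5))) : Set (alternatingGroup (Fin 5))) : Set (alternatingGroup (Fin 5))) ∧
    Nat.card (Sol x) = 10 := by
  have hA5 : Nat.card (alternatingGroup (Fin 5)) = 60 := by
    rw [nat_card_alternatingGroup]
    simp [Nat.factorial]
  have hsol := IsSimpleGroup.sol_eq_normalizer_zpowers hA5 hx
  refine ⟨hsol, ?_⟩
  rw [hsol]
  exact IsSimpleGroup.card_normalizer_of_card_eq_five hA5 (by rw [Nat.card_zpowers, hx])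
end
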